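/- arXiv:1808.09120 — 6 statements merged into one kernel-verified Lean document; each statement's English description precedes it below -/
import Mathlib

section
/- Let A* be a p-torsion free Dieudonné algebra. Then the map γ : (η_p A)*/p → (H*(A*/p), β) sending x ∈ (η_p A)^i to the class of x/p^i is a quasi-isomorphism of cochain complexes, where β is the Bockstein differential on H*(A*/p). -/
namespace Statement2

variable {A : ℕ → Type} [∀ n, AddCommGroup (A n)]

/-- `x ∈ (η_p A)^i = {x ∈ p^i A^i : d x ∈ p^{i+1} A^{i+1}}`. -/
def etaMem (p : ℕ) (d : ∀ n, A n →+ A (n + 1)) (i : ℕ) (x : A i) : Prop :=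
  (∃ y, x = (p : ℤ) ^ i • y) ∧ ∃ z, d i x = (p : ℤ) ^ (i + 1) • z

/-- `x` is a cocycle of the complex `(η_p A)*/p` in degree `i`. -/
def etaCocycle (p : ℕ) (d : ∀ n, A n →+ A (n + 1)) (i : ℕ) (x : A i) : Prop :=
  etaMem p d i x ∧ ∃ w, etaMem p d (i + 1) w ∧ d i x = (p : ℤ) • w

/-- `x` is a coboundary of the complex `(η_p A)*/p` in degree `i`
(i.e. lies in `p·(η_p A)^i + d (η_p A)^{i-1}`). -/
def etaCoboundary (p : ℕ) (d : ∀ n, A n →+ A (n + 1)) : ∀ i, A i → Prop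
  | 0, x => ∃ a, etaMem p d 0 a ∧ x = (p : ℤ) • a
  | (j + 1), x => ∃ a b, etaMem p d (j + 1) a ∧ etaMem p d j b ∧
      x = (p : ℤ) • a + d j b

/-- `x` represents the zero class of `H^i(A*/p)`, i.e. `x ∈ p A^i + d A^{i-1}`. -/
def hModPZero (p : ℕ) (d : ∀ n, A n →+ A (n + 1)) : ∀ i, A i → Prop
  | 0, x => ∃ u, x = (p : ℤ) • u
  | (j + 1), x => ∃ u v, x = (p : ℤ) • u + d j v

/-- `x` represents a cocycle of the complex `(H^*(A*/p), β)` in degree `i`: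
`x` is a cocycle mod `p` and its Bockstein `β[x] = [d x / p]` vanishes. -/
def bocksteinCocycle (p : ℕ) (d : ∀ n, A n →+ A (n + 1)) (i : ℕ) (x : A i) : Prop :=
  ∃ w, d i x = (p : ℤ) • w ∧ hModPZero p d (i + 1) w

/-- `x` represents a coboundary of the complex `(H^*(A*/p), β)` in degree `i`:
the class of `x` equals `β` of some class of `H^{i-1}(A*/p)`. -/
def bocksteinCoboundary (p : ℕ) (d : ∀ n, A n →+ A (n + 1)) : ∀ i, A i → Prop
  | 0, x => hModPZero p d 0 x
  | (j + 1), x => ∃ t s, d j t = (p : ℤ) • s ∧ hModPZero p d (j + 1) (x - s)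

/-- `p`-th power in degree `0` of the graded multiplication. -/
def gradedPow0 (mul : ∀ i j, A i →+ A j →+ A (i + j)) (one : A 0) : A 0 → ℕ → A 0
  | _, 0 => one
  | x, (n + 1) => mul 0 0 x (gradedPow0 mul one x n)

end Statement2

/-!
A cocycle `x` of `(H*(A*/p), β)` satisfies `d x = p (p u + d v)`, so `y = x - p v` has
`d y = p² u` and `p^i y` is a cocycle of `(η_p A)/p` mapping to the class of `x`. Conversely,
if `p^i y` is a cocycle of `(η_p A)/p`, cancelling `p^i` (there is no `p`-torsion) gives
`d y ∈ p² A`; if moreover `y = s + p u + d v` with `d t = p s`, then `d u ∈ p A` and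
`p^i y = p (p^i u) + d (p^{i-1} (t + p v))` with both `p^i u` and `p^{i-1} (t + p v)` in `η_p A`.
-/

namespace Statement2

variable {A : ℕ → Type} [∀ n, AddCommGroup (A n)] {p : ℕ} {d : ∀ n, A n →+ A (n + 1)}

theorem etaMem_pow_smul {i : ℕ} {y : A i} {z : A (i + 1)} (h : d i y = (p : ℤ) • z) :
    etaMem p d i ((p : ℤ) ^ i • y) :=
  ⟨⟨y, rfl⟩, z, by rw [map_zsmul, h, smul_smul, ← pow_succ]⟩

theorem bocksteinCoboundary_smul (i : ℕ) (v : A i) :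
    bocksteinCoboundary p d i ((p : ℤ) • v) :=
  match i with
  | 0 => ⟨v, rfl⟩
  | _ + 1 => ⟨0, 0, by simp, v, 0, by simp⟩

theorem d_eq_zero_of_d_eq_smul (hdd : ∀ n (x : A n), d (n + 1) (d n x) = 0)
    (hreg : ∀ n, IsSMulRegular (A n) (p : ℤ)) {i : ℕ} {x : A i} {w : A (i + 1)}
    (h : d i x = (p : ℤ) • w) : d (i + 1) w = 0 :=
  (hreg _).right_eq_zero_of_smul (by rw [← map_zsmul, ← h, hdd])

theorem exists_etaCocycle_of_bocksteinCocycle (hdd : ∀ n (x : A n), d (n + 1) (d n x) = 0)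
    (hreg : ∀ n, IsSMulRegular (A n) (p : ℤ)) {i : ℕ} {x : A i}
    (hx : bocksteinCocycle p d i x) :
    ∃ e y, etaCocycle p d i e ∧ e = (p : ℤ) ^ i • y ∧ bocksteinCoboundary p d i (x - y) := by
  obtain ⟨w, hdx, u, v, rfl⟩ := hx
  have hdu : d (i + 1) u = 0 := by
    have hdw := d_eq_zero_of_d_eq_smul hdd hreg hdx
    rw [map_add, hdd, add_zero, map_zsmul] at hdw
    exact (hreg _).right_eq_zero_of_smul hdw
  have hdy : d i (x - (p : ℤ) • v) = (p : ℤ) • (p : ℤ) • u := by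
    rw [map_sub, map_zsmul, hdx, smul_add, add_sub_cancel_right]
  refine ⟨_, _, ⟨etaMem_pow_smul hdy, (p : ℤ) ^ (i + 1) • u,
    etaMem_pow_smul (z := 0) (by rw [hdu, smul_zero]), ?_⟩, rfl, ?_⟩
  · rw [map_zsmul, hdy]
    module
  · rw [sub_sub_cancel]
    exact bocksteinCoboundary_smul i v

theorem exists_d_eq_smul_smul_of_etaCocycle (hreg : ∀ n, IsSMulRegular (A n) (p : ℤ))
    {i : ℕ} {y : A i} (he : etaCocycle p d i ((p : ℤ) ^ i • y)) :
    ∃ z, d i y = (p : ℤ) • (p : ℤ) • z := by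
  obtain ⟨-, w, ⟨⟨z, rfl⟩, -⟩, hde⟩ := he
  refine ⟨z, (hreg (i + 1)).pow i ?_⟩
  simp only [← map_zsmul, hde]
  module

theorem etaCoboundary_pow_smul_of_bocksteinCoboundary
    (hdd : ∀ n (x : A n), d (n + 1) (d n x) = 0) (hreg : ∀ n, IsSMulRegular (A n) (p : ℤ))
    {i : ℕ} {y : A i} (he : etaCocycle p d i ((p : ℤ) ^ i • y))
    (hy : bocksteinCoboundary p d i y) : etaCoboundary p d i ((p : ℤ) ^ i • y) := by
  obtain ⟨z, hdy⟩ := exists_d_eq_smul_smul_of_etaCocycle hreg he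
  match i, y, z, hdy, hy with
  | 0, y, z, hdy, ⟨u, hyu⟩ =>
    subst hyu
    have hdu : d 0 u = (p : ℤ) • z := hreg 1 (by dsimp only; rw [← map_zsmul, hdy])
    have hu := etaMem_pow_smul hdu
    rw [pow_zero, one_smul] at hu ⊢
    exact ⟨u, hu, rfl⟩
  | j + 1, y, z, hdy, ⟨t, s, hdt, u, v, hys⟩ =>
    obtain rfl := sub_eq_iff_eq_add'.mp hys
    have hds : d (j + 1) s = 0 := d_eq_zero_of_d_eq_smul hdd hreg hdt
    have hdu : d (j + 1) u = (p : ℤ) • z :=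
      hreg _ (by dsimp only; rw [← hdy, map_add, map_add, hds, map_zsmul, hdd, zero_add, add_zero])
    refine ⟨(p : ℤ) ^ (j + 1) • u, (p : ℤ) ^ j • (t + (p : ℤ) • v), etaMem_pow_smul hdu,
      etaMem_pow_smul (z := s + d j v) (by rw [map_add, map_zsmul, hdt, smul_add]), ?_⟩
    rw [map_zsmul, map_add, map_zsmul, hdt]
    module

end Statement2

open Statement2 in
theorem statement2_general
    (p : ℕ)
    (A : ℕ → Type) [∀ n, AddCommGroup (A n)]
    (d : ∀ n, A n →+ A (n + 1))
    (hdd : ∀ n (x : A n), d (n + 1) (d n x) = 0)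
    (htf : ∀ n (x : A n), (p : ℤ) • x = 0 → x = 0) :
    ∀ i : ℕ,
      -- surjectivity of `H^i(γ)`
      (∀ x : A i, bocksteinCocycle p d i x →
        ∃ e y, etaCocycle p d i e ∧ e = (p : ℤ) ^ i • y ∧
          bocksteinCoboundary p d i (x - y)) ∧
      -- injectivity of `H^i(γ)`
      (∀ (e y : A i), etaCocycle p d i e → e = (p : ℤ) ^ i • y →
        bocksteinCoboundary p d i y → etaCoboundary p d i e) := by
  have hreg : ∀ n, IsSMulRegular (A n) (p : ℤ) := fun n =>
    .of_right_eq_zero_of_smul (htf n)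
  intro i
  refine ⟨fun x hx => exists_etaCocycle_of_bocksteinCocycle hdd hreg hx, ?_⟩
  rintro e y he rfl hy
  exact etaCoboundary_pow_smul_of_bocksteinCoboundary hdd hreg he hy

open Statement2 in
/-- Let `A*` be a `p`-torsion free Dieudonné algebra.  Then the map
`γ : (η_p A)*/p → (H^*(A*/p), β)`, sending `x ∈ (η_p A)^i` with `x = p^i y` to the
class of `y` in `H^i(A*/p)` (with `β` the Bockstein differential), is a
quasi-isomorphism of cochain complexes: it induces a bijection on cohomology in
every degree, stated here on the level of representatives. -/
theorem statement2
    (p : ℕ) (hp : p.Prime)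
    (A : ℕ → Type) [∀ n, AddCommGroup (A n)]
    (d : ∀ n, A n →+ A (n + 1))
    (hdd : ∀ n (x : A n), d (n + 1) (d n x) = 0)
    (F : ∀ n, A n →+ A n)
    (one : A 0)
    (mul : ∀ i j, A i →+ A j →+ A (i + j))
    (hFmul : ∀ i j (x : A i) (y : A j),
      F (i + j) (mul i j x y) = mul i j (F i x) (F j y))
    (hFone : F 0 one = one)
    (hFp : ∀ x : A 0, ∃ y, F 0 x = Statement2.gradedPow0 mul one x p + (p : ℤ) • y)
    (hdF : ∀ n (x : A n), d n (F n x) = (p : ℤ) • F (n + 1) (d n x))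
    (htf : ∀ n (x : A n), (p : ℤ) • x = 0 → x = 0) :
    ∀ i : ℕ,
      -- surjectivity of `H^i(γ)`
      (∀ x : A i, bocksteinCocycle p d i x →
        ∃ e y, etaCocycle p d i e ∧ e = (p : ℤ) ^ i • y ∧
          bocksteinCoboundary p d i (x - y)) ∧
      -- injectivity of `H^i(γ)`
      (∀ (e y : A i), etaCocycle p d i e → e = (p : ℤ) ^ i • y →
        bocksteinCoboundary p d i y → etaCoboundary p d i e) :=
  statement2_general p A d hdd htf
end

section
/- Let R, R' be reduced 𝔽_p-algebras, each equipped as a log algebra over a log point (k, N) with monoid maps M → R and M' → R'. Equip W(R) and W(R') with the Teichmüller log structures [α] : M → W(R), [α'] : M' → W(R'). Then restriction induces a bijection between Frobenius-compatible morphisms of log W(k)-algebras (W(R), M) → (W(R'), M') and morphisms of log k-algebras (R, M) → (R', M'). -/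
/-!
A Frobenius-compatible ring map `g : W(A) → W(B)`, with `B` reduced of characteristic `p`, is
determined by its reduction `f : A → B`. As `F` is injective on `W(B)` and `F V = p`, `g` commutes
with `V`. A Teichmüller lift `u = [a]` satisfies `u ^ p = F u`, hence so does `g u`, and such
elements are determined by their constant coefficient; so `g [a] = [f a]`. Writing
`x = [x₀] + V y` then shows `g = W(f)` coefficient by coefficient. Existence is `W(f)` itself.
-/

namespace WittVector

variable {p : ℕ} [Fact p.Prime]

local notation "𝕎" => WittVector p

section CharP

variable {B : Type*} [CommRing B] [CharP B p]

theorem frobenius_teichmuller (a : B) :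
    frobenius (teichmuller p a) = teichmuller p a ^ p := by
  rw [frobenius_eq_map_frobenius, map_teichmuller, frobenius_def, map_pow]

theorem mul_mem_ker_truncate_succ {n : ℕ} {x y : 𝕎 B}
    (hx : x ∈ RingHom.ker (truncate (p := p) n)) (hy : y.coeff 0 = 0) :
    x * y ∈ RingHom.ker (truncate (p := p) (n + 1)) := by
  rw [mem_ker_truncate] at hx ⊢
  have hy' : ∀ i < 1, y.coeff i = 0 := by simpa using hy
  rw [eq_iterate_verschiebung hx, eq_iterate_verschiebung hy', iterate_verschiebung_mul]
  exact fun i hi => iterate_verschiebung_coeff_eq_zero _ hi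

theorem map_frobenius {A : Type*} [CommRing A] [CharP A p] (f : A →+* B) (x : 𝕎 A) :
    map f (frobenius x) = frobenius (map f x) := by
  ext n
  rw [map_coeff, coeff_frobenius_charP, coeff_frobenius_charP, map_coeff, map_pow]

variable [IsReduced B]

theorem frobenius_injective : Function.Injective (frobenius : 𝕎 B → 𝕎 B) := by
  rw [frobenius_eq_map_frobenius]
  exact map_injective _ (frobenius_inj B p)

theorem eq_of_pow_eq_frobenius {u v : 𝕎 B} (hu : u ^ p = frobenius u)
    (hv : v ^ p = frobenius v) (h0 : u.coeff 0 = v.coeff 0) : u = v := by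
  -- `u ^ p - v ^ p = (u - v) * S` with `S ∈ V W`, as its constant coefficient is `p u₀ ^ (p - 1) = 0`;
  -- so agreement of `u, v` below `n` forces `u ^ p = F u` and `v ^ p = F v` to agree at `n`.
  have hS : (∑ i ∈ Finset.range p, u ^ i * v ^ (p - 1 - i)).coeff 0 = 0 := by
    rw [← constantCoeff_apply, map_sum]
    simp only [map_mul, map_pow, constantCoeff_apply, h0, geom_sum₂_self, CharP.cast_eq_zero,
      zero_mul]
  have hcoeff : ∀ n, truncate n u = truncate n v → u.coeff n = v.coeff n := by
    intro n h
    have h' := mul_mem_ker_truncate_succ ((RingHom.sub_mem_ker_iff _).mpr h) hS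
    rw [mul_comm, geom_sum₂_mul, hu, hv, RingHom.sub_mem_ker_iff] at h'
    have := congrArg (TruncatedWittVector.coeff ⟨n, n.lt_succ_self⟩) h'
    simp only [coeff_truncate, coeff_frobenius_charP] at this
    exact frobenius_inj B p this
  have htrunc : ∀ n, truncate n u = truncate n v := by
    intro n
    induction n with
    | zero => exact TruncatedWittVector.ext fun i => i.elim0
    | succ n ih =>
      ext ⟨i, hi⟩
      simp only [coeff_truncate]
      rcases Nat.lt_succ_iff_lt_or_eq.mp hi with hi | rfl
      · simpa using congrArg (TruncatedWittVector.coeff ⟨i, hi⟩) ih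
      · exact hcoeff i ih
  ext n
  simpa using congrArg (TruncatedWittVector.coeff ⟨n, n.lt_succ_self⟩) (htrunc (n + 1))

end CharP

variable {A B : Type*} [CommRing A] [CommRing B] [CharP B p] [IsReduced B]

theorem map_verschiebung_of_frobenius {g : 𝕎 A →+* 𝕎 B}
    (hg : ∀ x, g (frobenius x) = frobenius (g x)) (x : 𝕎 A) :
    g (verschiebung x) = verschiebung (g x) :=
  frobenius_injective <| by
    rw [← hg, frobenius_verschiebung, frobenius_verschiebung, map_mul, map_natCast]

theorem exists_eq_teichmuller_add_verschiebung (x : 𝕎 A) :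
    ∃ y, x = teichmuller p (x.coeff 0) + verschiebung y := by
  have h : ∀ i < 1, (x - teichmuller p (x.coeff 0)).coeff i = 0 := by
    intro i hi
    rw [Nat.lt_one_iff.mp hi, ← constantCoeff_apply, map_sub, constantCoeff_apply,
      constantCoeff_apply, teichmuller_coeff_zero, sub_self]
  exact ⟨_, eq_add_of_sub_eq' (eq_iterate_verschiebung h)⟩

theorem ringHom_ext_of_frobenius [CharP A p] {g h : 𝕎 A →+* 𝕎 B}
    (hg : ∀ x, g (frobenius x) = frobenius (g x)) (hh : ∀ x, h (frobenius x) = frobenius (h x))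
    (h0 : ∀ x, (g x).coeff 0 = (h x).coeff 0) : g = h := by
  have hT : ∀ a, g (teichmuller p a) = h (teichmuller p a) := fun a =>
    eq_of_pow_eq_frobenius (by rw [← map_pow, ← frobenius_teichmuller, hg])
      (by rw [← map_pow, ← frobenius_teichmuller, hh]) (h0 _)
  have hV : ∀ x, ∃ y, g x - h x = verschiebung (g y - h y) := by
    intro x
    obtain ⟨y, hy⟩ := exists_eq_teichmuller_add_verschiebung x
    refine ⟨y, ?_⟩
    rw [hy, map_add, map_add, hT, map_verschiebung_of_frobenius hg,
      map_verschiebung_of_frobenius hh, add_sub_add_left_eq_sub, map_sub]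
  have hcoeff : ∀ n x, (g x - h x).coeff n = 0 := by
    intro n
    induction n with
    | zero =>
      intro x
      obtain ⟨y, hy⟩ := hV x
      rw [hy, verschiebung_coeff_zero]
    | succ n ih =>
      intro x
      obtain ⟨y, hy⟩ := hV x
      rw [hy, verschiebung_coeff_succ, ih]
  ext x : 1
  exact sub_eq_zero.mp (ext fun n => (hcoeff n x).trans (zero_coeff p B n).symm)

end WittVector

theorem statement6_general
    (p : ℕ) [Fact p.Prime]
    (k : Type) [Field k]
    -- the log point `(k, N)`
    (N : Type) [CommMonoid N]
    (R R' : Type) [CommRing R] [CommRing R'] [IsReduced R']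
    [CharP R p] [CharP R' p]
    -- `k`-algebra structures
    (σ : k →+* R) (σ' : k →+* R')
    -- the log structures over `N`
    (M M' : Type) [CommMonoid M] [CommMonoid M']
    (α : M →* R) (α' : M' →* R')
    (ιM : N →* M) (ιM' : N →* M') :
    ∀ (f : R →+* R') (ψ : M →* M'),
      f.comp σ = σ' →                              -- `f` is a `k`-algebra map
      (∀ n, ψ (ιM n) = ιM' n) →                    -- `ψ` is a map over `N`
      (∀ m, f (α m) = α' (ψ m)) →                  -- `(f, ψ)` respects the log structures
      ∃! g : WittVector p R →+* WittVector p R',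
        -- `g` is a `W(k)`-algebra map
        (∀ w : WittVector p k,
          g (WittVector.map σ w) = WittVector.map σ' w) ∧
        -- `g` is Frobenius compatible
        (∀ x, g (WittVector.frobenius x) = WittVector.frobenius (g x)) ∧
        -- `(g, ψ)` respects the Teichmüller log structures
        (∀ m, g (WittVector.teichmuller p (α m)) =
          WittVector.teichmuller p (α' (ψ m))) ∧
        -- `g` restricts to `f` modulo `V`
        (∀ x, WittVector.constantCoeff (g x) = f (WittVector.constantCoeff x)) := by
  intro f ψ hσ _ hα
  refine ⟨WittVector.map f, ⟨fun w => ?_, WittVector.map_frobenius f, fun m => ?_, fun x => ?_⟩,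
    ?_⟩
  · ext n
    simp only [WittVector.map_coeff, ← hσ, RingHom.comp_apply]
  · rw [WittVector.map_teichmuller, hα]
  · simp only [WittVector.constantCoeff_apply, WittVector.map_coeff]
  · rintro g ⟨-, hg, -, hg₀⟩
    refine WittVector.ringHom_ext_of_frobenius hg (WittVector.map_frobenius f) fun x => ?_
    simpa only [WittVector.constantCoeff_apply, WittVector.map_coeff] using hg₀ x

/-- Let `k` be a perfect field of characteristic `p`, `(k, N)` a log
point, and `R, R'` reduced `𝔽_p`-algebras equipped with log structures `M → R`,
`M' → R'` making them log algebras over `(k, N)`.  Equip `W(R)` and `W(R')` with the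
Teichmüller log structures.  Then restriction induces a bijection between
Frobenius-compatible morphisms of log `W(k)`-algebras `(W(R), M) → (W(R'), M')`
and morphisms of log `k`-algebras `(R, M) → (R', M')`; i.e. every morphism of log
`k`-algebras `(f, ψ)` lifts uniquely to a Frobenius-compatible `(g, ψ)`. -/
theorem statement6
    (p : ℕ) [Fact p.Prime]
    (k : Type) [Field k] [CharP k p] [PerfectRing k p]
    -- the log point `(k, N)`
    (N : Type) [CommMonoid N] (ν : N →* k)
    (R R' : Type) [CommRing R] [CommRing R'] [IsReduced R] [IsReduced R']
    [CharP R p] [CharP R' p]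
    -- `k`-algebra structures
    (σ : k →+* R) (σ' : k →+* R')
    -- the log structures over `N`
    (M M' : Type) [CommMonoid M] [CommMonoid M']
    (α : M →* R) (α' : M' →* R')
    (ιM : N →* M) (ιM' : N →* M')
    (hlog : ∀ n, α (ιM n) = σ (ν n)) (hlog' : ∀ n, α' (ιM' n) = σ' (ν n)) :
    ∀ (f : R →+* R') (ψ : M →* M'),
      f.comp σ = σ' →                              -- `f` is a `k`-algebra map
      (∀ n, ψ (ιM n) = ιM' n) →                    -- `ψ` is a map over `N`
      (∀ m, f (α m) = α' (ψ m)) →                  -- `(f, ψ)` respects the log structures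
      ∃! g : WittVector p R →+* WittVector p R',
        -- `g` is a `W(k)`-algebra map
        (∀ w : WittVector p k,
          g (WittVector.map σ w) = WittVector.map σ' w) ∧
        -- `g` is Frobenius compatible
        (∀ x, g (WittVector.frobenius x) = WittVector.frobenius (g x)) ∧
        -- `(g, ψ)` respects the Teichmüller log structures
        (∀ m, g (WittVector.teichmuller p (α m)) =
          WittVector.teichmuller p (α' (ψ m))) ∧
        -- `g` restricts to `f` modulo `V`
        (∀ x, WittVector.constantCoeff (g x) = f (WittVector.constantCoeff x)) :=
  statement6_general p k N R R' σ σ' M M' α α' ιM ιM'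
end

section
/- Let A be a p-torsion free ring with an endomorphism φ : A → A satisfying φ(x) ≡ x^p mod p. Define θ(x) = (φ(x) − x^p)/p. Then the map x ↦ x^{p−1} dx + dθ(x), from A to the module of Kähler differentials Ω¹_{A} regarded as an A-module via φ (i.e. a·λ := φ(a)λ), is a derivation: it is additive, and satisfies d̃(xy) = φ(x) d̃(y) + φ(y) d̃(x). -/
/-!
Additivity of `φ` gives `θ (x + y) = θ x + θ y - σ(x, y)`, where `σ = ((X + Y)^p - X^p - Y^p)/p`
is the integral polynomial of the binomial expansion. Its partial derivatives are read off in
the torsion-free ring `ℤ[X, Y]`, namely `∂σ/∂X = (X + Y)^(p-1) - X^(p-1)`, and the chain rule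
transports them to `Ω¹_A`; the cross terms then cancel against `(x + y)^(p-1) d(x + y)`.
Multiplicativity of `φ` gives `θ (x y) = x^p θ y + y^p θ x + p θ x θ y`, and the Leibniz rule
finishes the second claim.
-/

/-- The twisted derivation `x ↦ x^{p-1} d x + d θ(x)` into the absolute Kähler
differentials of `A`. -/
noncomputable def twistedD (p : ℕ) {A : Type} [CommRing A] (θ : A → A) (x : A) :
    Ω[A⁄ℤ] :=
  x ^ (p - 1) • KaehlerDifferential.D ℤ A x + KaehlerDifferential.D ℤ A (θ x)

open MvPolynomial

theorem Derivation.map_mvPolynomial_aeval {R A M σ : Type*} [CommSemiring R] [CommSemiring A]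
    [Algebra R A] [AddCommMonoid M] [Module A M] [Module R M] [IsScalarTower R A M] [Fintype σ]
    (D : Derivation R A M) (v : σ → A) (g : MvPolynomial σ R) :
    D (aeval v g) = ∑ i, aeval v (pderiv i g) • D (v i) := by
  classical
  induction g using MvPolynomial.induction_on with
  | C a => simp
  | add f g hf hg => simp only [map_add, hf, hg, add_smul, Finset.sum_add_distrib]
  | mul_X g i hg =>
    simp only [map_mul, aeval_X, leibniz, hg, Finset.smul_sum, smul_smul, mul_comm (v i), pderiv_X,
      Pi.single_apply, smul_eq_mul, mul_ite, mul_one, mul_zero, map_add, add_smul,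
      Finset.sum_add_distrib, apply_ite (aeval v), map_zero, ite_smul, zero_smul, Finset.sum_ite_eq,
      Finset.mem_univ, if_true]

namespace MvPolynomial

theorem exists_natCast_mul_eq_add_pow_sub_pow_sub_pow {p : ℕ} (hp : p.Prime) :
    ∃ σ : MvPolynomial (Fin 2) ℤ,
      (p : MvPolynomial (Fin 2) ℤ) * σ = (X 0 + X 1) ^ p - X 0 ^ p - X 1 ^ p := by
  have : Fact p.Prime := ⟨hp⟩
  have hdvd : C (p : ℤ) ∣ ((X 0 + X 1) ^ p - X 0 ^ p - X 1 ^ p : MvPolynomial (Fin 2) ℤ) := by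
    rw [C_dvd_iff_map_hom_eq_zero (Int.castRingHom (ZMod p)) _
      fun r => ZMod.intCast_zmod_eq_zero_iff_dvd r p]
    simp only [map_sub, map_pow, map_add, map_X, add_pow_char, add_sub_cancel_left, sub_self]
  obtain ⟨σ, hσ⟩ := hdvd
  exact ⟨σ, by rw [← map_natCast C, hσ]⟩

theorem pderiv_eq_of_natCast_mul_eq_add_pow_sub_pow_sub_pow {p : ℕ} (hp : p ≠ 0)
    {σ : MvPolynomial (Fin 2) ℤ}
    (hσ : (p : MvPolynomial (Fin 2) ℤ) * σ = (X 0 + X 1) ^ p - X 0 ^ p - X 1 ^ p) (i : Fin 2) :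
    pderiv i σ = (X 0 + X 1) ^ (p - 1) - X i ^ (p - 1) := by
  apply mul_left_cancel₀ (Nat.cast_ne_zero.mpr hp : (p : MvPolynomial (Fin 2) ℤ) ≠ 0)
  have h := congrArg (pderiv i) hσ
  rw [Derivation.leibniz, Derivation.map_natCast, smul_zero, add_zero, smul_eq_mul] at h
  rw [h]
  fin_cases i <;> simp [Derivation.leibniz_pow] <;> ring

end MvPolynomial

section FrobeniusLift

variable {p : ℕ} {A : Type*} [CommRing A] {φ : A →+* A} {θ : A → A}

theorem theta_add_eq (htf : ∀ x : A, (p : A) * x = 0 → x = 0)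
    (hθ : ∀ x, φ x = x ^ p + p * θ x) {x y s : A}
    (hs : (p : A) * s = (x + y) ^ p - x ^ p - y ^ p) :
    θ (x + y) = θ x + θ y - s := by
  have h := map_add φ x y
  rw [hθ, hθ, hθ] at h
  exact sub_eq_zero.mp (htf _ (by linear_combination h + hs))

theorem theta_mul_eq (htf : ∀ x : A, (p : A) * x = 0 → x = 0)
    (hθ : ∀ x, φ x = x ^ p + p * θ x) (x y : A) :
    θ (x * y) = x ^ p * θ y + y ^ p * θ x + p * (θ x * θ y) := by
  have h := map_mul φ x y
  rw [hθ, hθ, hθ] at h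
  exact sub_eq_zero.mp (htf _ (by linear_combination h))

end FrobeniusLift

theorem twistedD_add {p : ℕ} {A : Type} [CommRing A] {φ : A →+* A} {θ : A → A}
    (hp : p.Prime) (htf : ∀ x : A, (p : A) * x = 0 → x = 0) (hθ : ∀ x, φ x = x ^ p + p * θ x)
    (x y : A) : twistedD p θ (x + y) = twistedD p θ x + twistedD p θ y := by
  obtain ⟨σ, hσ⟩ := exists_natCast_mul_eq_add_pow_sub_pow_sub_pow hp
  have hpσ : (p : A) * aeval ![x, y] σ = (x + y) ^ p - x ^ p - y ^ p := by
    simpa using congrArg (aeval ![x, y]) hσ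
  have hdσ : KaehlerDifferential.D ℤ A (aeval ![x, y] σ) =
      ((x + y) ^ (p - 1) - x ^ (p - 1)) • KaehlerDifferential.D ℤ A x +
        ((x + y) ^ (p - 1) - y ^ (p - 1)) • KaehlerDifferential.D ℤ A y := by
    simp [Derivation.map_mvPolynomial_aeval,
      pderiv_eq_of_natCast_mul_eq_add_pow_sub_pow_sub_pow hp.ne_zero hσ]
  simp only [twistedD, theta_add_eq htf hθ hpσ, map_sub, map_add, hdσ]
  module

theorem twistedD_mul {p : ℕ} {A : Type} [CommRing A] {φ : A →+* A} {θ : A → A}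
    (hp : p ≠ 0) (htf : ∀ x : A, (p : A) * x = 0 → x = 0) (hθ : ∀ x, φ x = x ^ p + p * θ x)
    (x y : A) :
    twistedD p θ (x * y) = φ x • twistedD p θ y + φ y • twistedD p θ x := by
  simp only [twistedD, theta_mul_eq htf hθ, hθ x, hθ y, map_add, Derivation.leibniz,
    Derivation.leibniz_pow, Derivation.map_natCast]
  match_scalars
  · linear_combination y ^ (p - 1) * pow_sub_one_mul hp x
  · linear_combination x ^ (p - 1) * pow_sub_one_mul hp y
  · ring
  · ring

/-- Let `A` be a `p`-torsion free ring with a Frobenius lift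
`φ` (i.e. `φ x ≡ x^p mod p`), and set `θ x = (φ x − x^p)/p`.  The map
`x ↦ x^{p−1} d x + d θ(x)` from `A` to `Ω¹_A`, regarded as an `A`-module via `φ`,
is a derivation: it is additive and satisfies
`d̃(xy) = φ(x) d̃(y) + φ(y) d̃(x)`. -/
theorem statement7
    (p : ℕ) (hp : p.Prime)
    (A : Type) [CommRing A]
    (htf : ∀ x : A, (p : A) * x = 0 → x = 0)
    (φ : A →+* A) (θ : A → A)
    (hθ : ∀ x, φ x = x ^ p + p * θ x) :
    (∀ x y : A, twistedD p θ (x + y) = twistedD p θ x + twistedD p θ y) ∧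
    (∀ x y : A, twistedD p θ (x * y) = φ x • twistedD p θ y + φ y • twistedD p θ x) :=
  ⟨twistedD_add hp htf hθ, twistedD_mul hp.ne_zero htf hθ⟩
end

section
/- In W(R) for R an 𝔽_p-algebra, for any element z = [x] + Vy (x ∈ R, y ∈ W(R)), one has the identity of Kähler differentials [x]^{p−1}·d[x] + dy = z^{p−1}·dz + d((F(z) − z^p)/p) in Ω¹_{W(R)}[1/p], where F is the Witt vector Frobenius. -/
open WittVector

/-
Since `R` has characteristic `p`, the Witt vector Frobenius acts on Teichmüller lifts by
`F [x] = [x^p] = [x]^p`, and `F V = p`; hence `F z = [x]^p + p y`. Applying `d` to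
`F z - z^p` and using the Leibniz rule `d(a^p) = p a^(p-1) da` gives the identity.
-/

theorem WittVector.frobenius_teichmuller_s10 (p : ℕ) [Fact p.Prime] {R : Type*} [CommRing R]
    [CharP R p] (x : R) : frobenius (teichmuller p x) = teichmuller p x ^ p := by
  rw [frobenius_eq_map_frobenius, map_teichmuller, ← map_pow]
  rfl

theorem WittVector.frobenius_teichmuller_add_verschiebung (p : ℕ) [Fact p.Prime] {R : Type*}
    [CommRing R] [CharP R p] (x : R) (y : WittVector p R) :
    frobenius (teichmuller p x + verschiebung y) = teichmuller p x ^ p + y * p := by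
  rw [map_add, frobenius_verschiebung, frobenius_teichmuller_s10]

theorem Derivation.map_pow_add_mul_natCast_sub_pow {R A M : Type*} [CommSemiring R]
    [CommRing A] [Algebra R A] [AddCommGroup M] [Module A M] [Module R M]
    [IsScalarTower R A M] (D : Derivation R A M) (n : ℕ) (a y z : A) :
    D (a ^ n + y * n - z ^ n) = n • (a ^ (n - 1) • D a + D y) - n • (z ^ (n - 1) • D z) := by
  rw [map_sub, map_add, leibniz_pow, leibniz_pow, mul_comm, ← nsmul_eq_mul, map_nsmul, smul_add]

/-- In `W(R)` for `R` an `𝔽_p`-algebra, for any element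
`z = [x] + V y` one has the identity
`[x]^{p−1}·d[x] + d y = z^{p−1}·d z + d((F z − z^p)/p)`
of Kähler differentials, interpreted (as `W(R)` may have `p`-torsion) after
multiplying both sides by `p`. -/
theorem statement10
    (p : ℕ) [Fact p.Prime] (R : Type) [CommRing R] [CharP R p]
    (x : R) (y : WittVector p R) (z : WittVector p R)
    (hz : z = teichmuller p x + verschiebung y) :
    (p : ℤ) • ((teichmuller p x) ^ (p - 1) •
        KaehlerDifferential.D ℤ (WittVector p R) (teichmuller p x) +
      KaehlerDifferential.D ℤ (WittVector p R) y) =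
    (p : ℤ) • (z ^ (p - 1) • KaehlerDifferential.D ℤ (WittVector p R) z) +
      KaehlerDifferential.D ℤ (WittVector p R) (frobenius z - z ^ p) := by
  have hF : frobenius z = teichmuller p x ^ p + y * p := by
    rw [hz, frobenius_teichmuller_add_verschiebung]
  rw [hF, Derivation.map_pow_add_mul_natCast_sub_pow, natCast_zsmul, natCast_zsmul]
  abel
end

section
/- Let A* be a p-torsion free log Dieudonné algebra with log structure α : L → A^0, log derivation δ : L → A¹ and Frobenius F_L on L. Then η_p(A*) carries a canonical log Dieudonné algebra structure with log structure η_p(α) = α ∘ F_L and log derivation η_p(δ) = δ ∘ F_L; in particular α ∘ F_L lands in (η_p A)^0 and δ ∘ F_L lands in (η_p A)¹, using the relations dF = pFd and δ ∘ F_L = pFδ. -/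
/-! Everything is transported along the Frobenius: `d (α (F_L m)) = d (F (α m)) = p • F (d (α m))`,
`δ (F_L m) = p • F (δ m)`, and `d (δ (F_L m)) = p² • F (d (δ m)) = 0`. The log derivation identity
for `(α ∘ F_L, δ ∘ F_L)` is the image under the multiplicative `F` of the one for `(α, δ)`,
multiplied by `p`. -/

section LogDieudonne

variable {A : ℕ → Type*} [∀ n, AddCommGroup (A n)] {L : Type*}

def IsLogDerivation (d : ∀ n, A n →+ A (n + 1)) (mul : ∀ i j, A i →+ A j →+ A (i + j))
    (α : L → A 0) (δ : L → A 1) : Prop :=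
  (∀ m, mul 0 1 (α m) (δ m) = d 0 (α m)) ∧ ∀ m, d 1 (δ m) = 0

theorem IsLogDerivation.comp_frobenius {d : ∀ n, A n →+ A (n + 1)}
    {mul : ∀ i j, A i →+ A j →+ A (i + j)} {α : L → A 0} {δ : L → A 1}
    (h : IsLogDerivation d mul α δ) (F : ∀ n, A n →+ A n) (p : ℤ) (FL : L → L)
    (hdF : ∀ n (x : A n), d n (F n x) = p • F (n + 1) (d n x))
    (hFmul : ∀ i j (x : A i) (y : A j), F (i + j) (mul i j x y) = mul i j (F i x) (F j y))
    (hFα : ∀ m, F 0 (α m) = α (FL m)) (hδF : ∀ m, δ (FL m) = p • F 1 (δ m)) :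
    IsLogDerivation d mul (α ∘ FL) (δ ∘ FL) := by
  constructor
  · intro m
    calc mul 0 1 (α (FL m)) (δ (FL m))
        = p • F 1 (mul 0 1 (α m) (δ m)) := by rw [← hFα, hδF, map_zsmul, ← hFmul]
      _ = d 0 (α (FL m)) := by rw [h.1, ← hdF, hFα]
  · intro m
    simp only [Function.comp_apply, hδF, map_zsmul, hdF, h.2, map_zero, smul_zero]

end LogDieudonne

theorem statement16_general
    (p : ℕ)
    (A : ℕ → Type) [∀ n, AddCommGroup (A n)]
    (d : ∀ n, A n →+ A (n + 1))
    (F : ∀ n, A n →+ A n)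
    (hdF : ∀ n (x : A n), d n (F n x) = (p : ℤ) • F (n + 1) (d n x))
    (mul : ∀ i j, A i →+ A j →+ A (i + j))
    (hFmul : ∀ i j (x : A i) (y : A j),
      F (i + j) (mul i j x y) = mul i j (F i x) (F j y))
    -- the log structure, log derivation and log Frobenius
    (L : Type)
    (α : L → A 0) (δ : L → A 1) (FL : L → L)
    (hαδ : ∀ m, mul 0 1 (α m) (δ m) = d 0 (α m))
    (hdδ : ∀ m, d 1 (δ m) = 0)
    (hFα : ∀ m, F 0 (α m) = α (FL m))
    (hδF : ∀ m, δ (FL m) = (p : ℤ) • F 1 (δ m)) :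
    -- `α (F_L m)` lies in `(η_p A)⁰`
    (∀ m, ∃ z, d 0 (α (FL m)) = (p : ℤ) • z) ∧
    -- `δ (F_L m)` lies in `(η_p A)¹`
    (∀ m, ∃ z, δ (FL m) = (p : ℤ) • z) ∧
    (∀ m, ∃ w, d 1 (δ (FL m)) = (p : ℤ) ^ 2 • w) ∧
    -- `(α ∘ F_L, δ ∘ F_L)` is again a log derivation, with `d ∘ (δ ∘ F_L) = 0`
    (∀ m, mul 0 1 (α (FL m)) (δ (FL m)) = d 0 (α (FL m))) ∧
    (∀ m, d 1 (δ (FL m)) = 0) := by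
  obtain ⟨hαδ', hdδ'⟩ :=
    IsLogDerivation.comp_frobenius ⟨hαδ, hdδ⟩ F p FL hdF hFmul hFα hδF
  refine ⟨fun m => ⟨F 1 (d 0 (α m)), ?_⟩, fun m => ⟨F 1 (δ m), hδF m⟩,
    fun m => ⟨0, (hdδ' m).trans (smul_zero _).symm⟩, hαδ', hdδ'⟩
  rw [← hFα, hdF]

/-- Let `A*` be a `p`-torsion free log Dieudonné algebra with log
structure `α : L → A⁰`, log derivation `δ : L → A¹` and Frobenius `F_L` on `L`.
Then `η_p(A*)` carries a canonical log Dieudonné algebra structure with log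
structure `η_p(α) = α ∘ F_L` and log derivation `η_p(δ) = δ ∘ F_L`.  In
particular: `α(F_L m) ∈ (η_p A)⁰` (i.e. `d(α(F_L m)) ∈ p A¹`),
`δ(F_L m) ∈ (η_p A)¹ = p A¹ ∩ d⁻¹(p² A²)`, and the pair `(α ∘ F_L, δ ∘ F_L)`
is again a log derivation. -/
theorem statement16
    (p : ℕ) (hp : p.Prime)
    (A : ℕ → Type) [∀ n, AddCommGroup (A n)]
    (d : ∀ n, A n →+ A (n + 1))
    (hdd : ∀ n (x : A n), d (n + 1) (d n x) = 0)
    (F : ∀ n, A n →+ A n)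
    (hdF : ∀ n (x : A n), d n (F n x) = (p : ℤ) • F (n + 1) (d n x))
    (htf : ∀ n (x : A n), (p : ℤ) • x = 0 → x = 0)
    (mul : ∀ i j, A i →+ A j →+ A (i + j))
    (hFmul : ∀ i j (x : A i) (y : A j),
      F (i + j) (mul i j x y) = mul i j (F i x) (F j y))
    -- the log structure, log derivation and log Frobenius
    (L : Type) [CommMonoid L]
    (α : L → A 0) (δ : L → A 1) (FL : L → L)
    (hαδ : ∀ m, mul 0 1 (α m) (δ m) = d 0 (α m))
    (hdδ : ∀ m, d 1 (δ m) = 0)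
    (hFα : ∀ m, F 0 (α m) = α (FL m))
    (hδF : ∀ m, δ (FL m) = (p : ℤ) • F 1 (δ m)) :
    -- `α (F_L m)` lies in `(η_p A)⁰`
    (∀ m, ∃ z, d 0 (α (FL m)) = (p : ℤ) • z) ∧
    -- `δ (F_L m)` lies in `(η_p A)¹`
    (∀ m, ∃ z, δ (FL m) = (p : ℤ) • z) ∧
    (∀ m, ∃ w, d 1 (δ (FL m)) = (p : ℤ) ^ 2 • w) ∧
    -- `(α ∘ F_L, δ ∘ F_L)` is again a log derivation, with `d ∘ (δ ∘ F_L) = 0`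
    (∀ m, mul 0 1 (α (FL m)) (δ (FL m)) = d 0 (α (FL m))) ∧
    (∀ m, d 1 (δ (FL m)) = 0) :=
  statement16_general p A d F hdF mul hFmul L α δ FL hαδ hdδ hFα hδF
end

section
/- Let A = A_inf⟨X₀, X₁⟩/(X₀X₁ − [ϖ^♭]) and let γ act A_inf-linearly by γ(X₀) = [ε]^{-1}X₀, γ(X₁) = [ε]X₁. Then in the complex A → A (in degrees 0, 1) with differential (γ−1)/([ε]−1), the differential is given on monomials by X₀^m ↦ −([ε]^{-m} + ⋯ + [ε]^{-1})·X₀^m and X₁^m ↦ (1 + [ε] + ⋯ + [ε]^{m−1})·X₁^m. Consequently, after base change along the crystalline specialization ϑ̃ : A_inf → W(k) (which kills [ϖ^♭] and sends [ε] to 1), the differential sends T_0^{m/p} ↦ −m·T_0^{m/p} and T_1^{m/p} ↦ m·T_1^{m/p}; in particular T_i^{p^{r−1}} is a cocycle modulo p^r. -/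
/-!
`X₀` and `X₁` are eigenvectors of `γ` with eigenvalues `[ε]⁻¹` and `[ε]`, so `X_i^m` is an
eigenvector with eigenvalue `[ε]^{∓m}`, and dividing `[ε]^{∓m} - 1` by `[ε] - 1` is a geometric
sum.  Since `[ε] - 1` is a non-zero-divisor, this quotient is the eigenvalue of `δ`.  Under a
specialization sending `[ε]` to `1`, each of the `m` terms of the geometric sum becomes `1`.
-/

open Finset

section

variable {A : Type*} [Ring A]

theorem eq_mul_of_isLeftRegular_of_mul_eq {c w s x d : A} (hc : IsLeftRegular c)
    (hs : c * s = w - 1) (hd : c * d = w * x - x) : d = s * x :=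
  hc (show c * d = c * (s * x) by rw [hd, ← mul_assoc, hs, sub_one_mul])

theorem sub_one_mul_neg_sum_inv_pow_succ (u : Aˣ) (m : ℕ) :
    ((u : A) - 1) * -(∑ i ∈ range m, ((u⁻¹ : Aˣ) : A) ^ (i + 1)) = ((u⁻¹ : Aˣ) : A) ^ m - 1 := by
  have hu : ((u : A) - 1) * ((u⁻¹ : Aˣ) : A) = 1 - ((u⁻¹ : Aˣ) : A) := by
    rw [sub_one_mul, Units.mul_inv]
  simp_rw [pow_succ']
  rw [← mul_sum, mul_neg, ← mul_assoc, hu, mul_neg_geom_sum, neg_sub]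

theorem map_sum_range_pow_of_map_eq_one {B : Type*} [Semiring B] (θ : A →+* B) {x : A}
    (hx : θ x = 1) (e : ℕ → ℕ) (m : ℕ) : θ (∑ i ∈ range m, x ^ e i) = m := by
  simp [map_pow, hx]

end

/-- Let `A = A_inf⟨X₀, X₁⟩/(X₀X₁ − [ϖ^♭])` with `γ` acting
`A_inf`-linearly by `γ X₀ = [ε]⁻¹ X₀`, `γ X₁ = [ε] X₁`.  In the two-term complex
`A → A` with differential `δ = (γ − 1)/([ε] − 1)`, the differential is given on
monomials by `X₀^m ↦ −([ε]^{-m} + ⋯ + [ε]^{-1}) X₀^m` and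
`X₁^m ↦ (1 + [ε] + ⋯ + [ε]^{m−1}) X₁^m`.  Consequently, after base change along
the crystalline specialization `ϑ̃` (which sends `[ε]` to `1`), the differential
sends the monomial of exponent `m` to `∓m` times itself; in particular the
`p^r`-th powers are cocycles modulo `p^r`. -/
theorem statement18
    (A : Type) [CommRing A]
    (eps : Aˣ)                                  -- the unit `[ε]`
    (X0 X1 : A) (γ : A →+* A)
    (hγ0 : γ X0 = ((eps⁻¹ : Aˣ) : A) * X0)
    (hγ1 : γ X1 = ((eps : Aˣ) : A) * X1)
    (δ : A → A)
    (hδ : ∀ x, (((eps : Aˣ) : A) - 1) * δ x = γ x - x)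
    (htf : ∀ x : A, (((eps : Aˣ) : A) - 1) * x = 0 → x = 0) :
    (∀ m : ℕ, δ (X0 ^ m) =
      -(∑ i ∈ Finset.range m, ((eps⁻¹ : Aˣ) : A) ^ (i + 1)) * X0 ^ m) ∧
    (∀ m : ℕ, δ (X1 ^ m) =
      (∑ i ∈ Finset.range m, ((eps : Aˣ) : A) ^ i) * X1 ^ m) ∧
    -- base change along the crystalline specialization `ϑ̃ : A_inf → W(k)`
    ∀ (B : Type) [CommRing B], ∀ θ : A →+* B, θ ((eps : Aˣ) : A) = 1 →
      (∀ m : ℕ, θ (δ (X0 ^ m)) = -(m : B) * θ X0 ^ m) ∧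
      (∀ m : ℕ, θ (δ (X1 ^ m)) = (m : B) * θ X1 ^ m) ∧
      -- in particular `T_i^{p^{r-1}}` is a cocycle modulo `p^r`
      (∀ (pp r : ℕ), θ (δ (X0 ^ pp ^ r)) = -((pp : B)) ^ r * θ X0 ^ pp ^ r) ∧
      (∀ (pp r : ℕ), θ (δ (X1 ^ pp ^ r)) = ((pp : B)) ^ r * θ X1 ^ pp ^ r) := by
  have hreg : IsLeftRegular ((eps : A) - 1) := isLeftRegular_iff_right_eq_zero_of_mul.mpr htf
  have δ0 : ∀ m : ℕ, δ (X0 ^ m) = -(∑ i ∈ range m, ((eps⁻¹ : Aˣ) : A) ^ (i + 1)) * X0 ^ m :=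
    fun m ↦ eq_mul_of_isLeftRegular_of_mul_eq hreg (sub_one_mul_neg_sum_inv_pow_succ eps m)
      (by rw [hδ, map_pow, hγ0, mul_pow])
  have δ1 : ∀ m : ℕ, δ (X1 ^ m) = (∑ i ∈ range m, (eps : A) ^ i) * X1 ^ m :=
    fun m ↦ eq_mul_of_isLeftRegular_of_mul_eq hreg (mul_geom_sum _ m)
      (by rw [hδ, map_pow, hγ1, mul_pow])
  refine ⟨δ0, δ1, fun B _ θ hθ ↦ ?_⟩
  have hθinv : θ ((eps⁻¹ : Aˣ) : A) = 1 := by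
    simpa only [map_mul, hθ, one_mul, map_one] using congrArg θ eps.mul_inv
  have θδ0 : ∀ m : ℕ, θ (δ (X0 ^ m)) = -(m : B) * θ X0 ^ m := fun m ↦ by
    rw [δ0, map_mul, map_neg, map_sum_range_pow_of_map_eq_one θ hθinv (· + 1), map_pow]
  have θδ1 : ∀ m : ℕ, θ (δ (X1 ^ m)) = (m : B) * θ X1 ^ m := fun m ↦ by
    rw [δ1, map_mul, map_sum_range_pow_of_map_eq_one θ hθ (fun i ↦ i), map_pow]
  exact ⟨θδ0, θδ1, fun pp r ↦ by rw [θδ0, Nat.cast_pow], fun pp r ↦ by rw [θδ1, Nat.cast_pow]⟩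
end
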